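/- arXiv:1204.4916 — 3 statements merged into one kernel-verified Lean document; each statement's English description precedes it below -/
import Mathlib

section
/- Let G be a nonempty compact convex set of n×n real matrices such that ‖Mx‖ ≥ δ > 0 for every M ∈ G and every unit vector x ∈ ℝⁿ. Then for every unit vector v ∈ ℝⁿ there exists a unit vector w ∈ ℝⁿ such that ⟨w, Mv⟩ ≥ δ for all M ∈ G. -/
open scoped RealInnerProductSpace

/-- Separation lemma: if `G` is a nonempty compact convex set of `n × n` matrices with
`‖Mx‖ ≥ δ > 0` for all `M ∈ G` and all unit vectors `x`, then for every unit vector `v`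
there is a unit vector `w` with `⟨w, Mv⟩ ≥ δ` for all `M ∈ G`. -/
theorem exists_unit_separating_vector {n : ℕ} (G : Set (Matrix (Fin n) (Fin n) ℝ))
    (hne : G.Nonempty) (hcomp : IsCompact G) (hconv : Convex ℝ G) (δ : ℝ) (hδ : 0 < δ)
    (hG : ∀ M ∈ G, ∀ x : EuclideanSpace ℝ (Fin n), ‖x‖ = 1 →
      δ ≤ ‖Matrix.toEuclideanLin (𝕜 := ℝ) M x‖)
    (v : EuclideanSpace ℝ (Fin n)) (hv : ‖v‖ = 1) :
    ∃ w : EuclideanSpace ℝ (Fin n), ‖w‖ = 1 ∧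
      ∀ M ∈ G, δ ≤ ⟪w, Matrix.toEuclideanLin (𝕜 := ℝ) M v⟫ := by
  set φ : Matrix (Fin n) (Fin n) ℝ →ₗ[ℝ] EuclideanSpace ℝ (Fin n) :=
    (LinearMap.applyₗ v).comp (Matrix.toEuclideanLin (𝕜 := ℝ)).toLinearMap with hφ
  have hφapp : ∀ M, φ M = Matrix.toEuclideanLin (𝕜 := ℝ) M v := fun M => rfl
  set K : Set (EuclideanSpace ℝ (Fin n)) := φ '' G with hK
  have hKne : K.Nonempty := hne.image φ
  have hKcomp : IsCompact K := hcomp.image φ.continuous_of_finiteDimensional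
  have hKconv : Convex ℝ K := hconv.linear_image φ
  obtain ⟨p, hpK, hpmin⟩ := hKcomp.exists_isMinOn hKne continuous_norm.continuousOn
  have hδp : δ ≤ ‖p‖ := by
    obtain ⟨M, hM, rfl⟩ := hpK
    exact hG M hM v hv
  have hp0 : p ≠ 0 := fun h => absurd hδp (by simp [h]; linarith)
  have hnormpos : (0 : ℝ) < ‖p‖ := lt_of_lt_of_le hδ hδp
  haveI := hKne.to_subtype
  have hinf : ‖(0 : EuclideanSpace ℝ (Fin n)) - p‖ = ⨅ w : K, ‖(0 : EuclideanSpace ℝ (Fin n)) - w‖ := by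
    refine le_antisymm (le_ciInf fun w => ?_) ?_
    · simpa using hpmin w.2
    · exact ciInf_le ⟨0, fun x ⟨w, hw⟩ => hw ▸ norm_nonneg _⟩ (⟨p, hpK⟩ : K)
  have hvar := (norm_eq_iInf_iff_real_inner_le_zero hKconv hpK).mp hinf
  refine ⟨‖p‖⁻¹ • p, ?_, ?_⟩
  · simp [norm_smul, abs_of_pos (inv_pos.mpr hnormpos), inv_mul_cancel₀ hnormpos.ne']
  · intro M hM
    have hy : φ M ∈ K := ⟨M, hM, rfl⟩
    have h1 : ⟪(0 : EuclideanSpace ℝ (Fin n)) - p, φ M - p⟫ ≤ 0 := hvar _ hy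
    have h2 : ‖p‖ ^ 2 ≤ ⟪p, φ M⟫ := by
      have := h1
      simp only [zero_sub, inner_neg_left, inner_sub_right, neg_nonpos] at this
      nlinarith [real_inner_self_eq_norm_sq p]
    rw [← hφapp, real_inner_smul_left]
    calc δ ≤ ‖p‖ := hδp
      _ = ‖p‖⁻¹ * ‖p‖ ^ 2 := by field_simp
      _ ≤ ‖p‖⁻¹ * ⟪p, φ M⟫ := by
          exact mul_le_mul_of_nonneg_left h2 (inv_pos.mpr hnormpos).le
end

section
/- Let M₁ be an n×m matrix with ‖M₁‖ ≤ K and M₂ an invertible n×n matrix, and let M = [[I_m, 0], [M₁, M₂]]. Then the operator norm of M⁻¹ satisfies ‖M⁻¹‖ ≤ (m + (1 + mK²)·‖M₂⁻¹‖_F²)^{1/2} ≤ (m + (1 + mK²)·n·‖M₂⁻¹‖²)^{1/2}. -/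
/-- The operator norm of a real matrix, induced by the Euclidean norms. -/
noncomputable def matOpNorm {m n : Type*} [Fintype m] [Fintype n] [DecidableEq n]
    (A : Matrix m n ℝ) : ℝ :=
  ‖LinearMap.toContinuousLinearMap (Matrix.toEuclideanLin (𝕜 := ℝ) A)‖

/-- The Frobenius norm of a real matrix. -/
noncomputable def matFrobNorm {m n : Type*} [Fintype m] [Fintype n]
    (A : Matrix m n ℝ) : ℝ :=
  Real.sqrt (∑ i, ∑ j, (A i j) ^ 2)

/-!
Since `M⁻¹ = [[I, 0], [-M₂⁻¹ M₁, M₂⁻¹]]`, bounding the operator norm by the Frobenius norm gives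
`‖M⁻¹‖² ≤ m + ‖M₂⁻¹ M₁‖_F² + ‖M₂⁻¹‖_F²`, and `‖M₂⁻¹ M₁‖_F ≤ ‖M₂⁻¹‖ ‖M₁‖_F ≤ ‖M₂⁻¹‖_F ‖M₁‖_F`.
Both remaining estimates, `‖M₁‖_F² ≤ m K²` and `‖M₂⁻¹‖_F² ≤ n ‖M₂⁻¹‖²`, come from
`‖A‖_F² ≤ (number of columns) · ‖A‖²`: each column `A eⱼ` has Euclidean norm at most `‖A‖`.
-/

open Matrix

section MatrixNorms

variable {a b c : Type*} [Fintype a] [Fintype b] [Fintype c]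

lemma matOpNorm_nonneg [DecidableEq b] (A : Matrix a b ℝ) : 0 ≤ matOpNorm A :=
  norm_nonneg _

lemma matFrobNorm_nonneg (A : Matrix a b ℝ) : 0 ≤ matFrobNorm A :=
  Real.sqrt_nonneg _

lemma matFrobNorm_sq (A : Matrix a b ℝ) : matFrobNorm A ^ 2 = ∑ i, ∑ j, A i j ^ 2 :=
  Real.sq_sqrt <| Finset.sum_nonneg fun _ _ => Finset.sum_nonneg fun _ _ => sq_nonneg _

lemma sum_sq_mulVec_le_matOpNorm_sq_mul [DecidableEq b] (A : Matrix a b ℝ) (x : b → ℝ) :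
    ∑ i, (A *ᵥ x) i ^ 2 ≤ matOpNorm A ^ 2 * ∑ j, x j ^ 2 := by
  have h := (LinearMap.toContinuousLinearMap (toEuclideanLin (𝕜 := ℝ) A)).le_opNorm
    (WithLp.toLp 2 x)
  have h2 := pow_le_pow_left₀ (norm_nonneg _) h 2
  rwa [mul_pow, EuclideanSpace.real_norm_sq_eq, EuclideanSpace.real_norm_sq_eq] at h2

lemma sum_sq_mulVec_le_matFrobNorm_sq_mul (A : Matrix a b ℝ) (x : b → ℝ) :
    ∑ i, (A *ᵥ x) i ^ 2 ≤ matFrobNorm A ^ 2 * ∑ j, x j ^ 2 := by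
  rw [matFrobNorm_sq, Finset.sum_mul]
  exact Finset.sum_le_sum fun i _ => Finset.sum_mul_sq_le_sq_mul_sq _ _ _

lemma matOpNorm_le_of_sum_sq_mulVec_le [DecidableEq b] (A : Matrix a b ℝ) {C : ℝ} (hC : 0 ≤ C)
    (h : ∀ x : b → ℝ, ∑ i, (A *ᵥ x) i ^ 2 ≤ C ^ 2 * ∑ j, x j ^ 2) :
    matOpNorm A ≤ C := by
  refine ContinuousLinearMap.opNorm_le_bound _ hC fun x => ?_
  rw [← pow_le_pow_iff_left₀ (norm_nonneg _) (by positivity) two_ne_zero, mul_pow,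
    EuclideanSpace.real_norm_sq_eq, EuclideanSpace.real_norm_sq_eq]
  exact h x

lemma matOpNorm_le_matFrobNorm [DecidableEq b] (A : Matrix a b ℝ) :
    matOpNorm A ≤ matFrobNorm A :=
  matOpNorm_le_of_sum_sq_mulVec_le A (matFrobNorm_nonneg A)
    (sum_sq_mulVec_le_matFrobNorm_sq_mul A)

lemma sum_sq_col_le_matOpNorm_sq [DecidableEq b] (A : Matrix a b ℝ) (j : b) :
    ∑ i, A i j ^ 2 ≤ matOpNorm A ^ 2 := by
  simpa [mulVec_single_one, Pi.single_apply] using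
    sum_sq_mulVec_le_matOpNorm_sq_mul A (Pi.single j 1)

lemma matFrobNorm_sq_le_card_mul_matOpNorm_sq [DecidableEq b] (A : Matrix a b ℝ) :
    matFrobNorm A ^ 2 ≤ Fintype.card b * matOpNorm A ^ 2 := by
  rw [matFrobNorm_sq, Finset.sum_comm]
  simpa using Finset.sum_le_sum fun j (_ : j ∈ Finset.univ) => sum_sq_col_le_matOpNorm_sq A j

lemma matFrobNorm_mul_sq_le [DecidableEq b] (B : Matrix a b ℝ) (A : Matrix b c ℝ) :
    matFrobNorm (B * A) ^ 2 ≤ matOpNorm B ^ 2 * matFrobNorm A ^ 2 := by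
  classical
  have hcol (k : c) : ∑ i, (B * A) i k ^ 2 ≤ matOpNorm B ^ 2 * ∑ j, A j k ^ 2 := by
    have h := sum_sq_mulVec_le_matOpNorm_sq_mul B (A *ᵥ Pi.single k 1)
    rwa [mulVec_mulVec, mulVec_single_one, mulVec_single_one] at h
  rw [matFrobNorm_sq, matFrobNorm_sq, Finset.sum_comm, Finset.sum_comm (f := fun j k => A j k ^ 2),
    Finset.mul_sum]
  exact Finset.sum_le_sum fun k _ => hcol k

lemma matFrobNorm_zero : matFrobNorm (0 : Matrix a b ℝ) = 0 := by
  simp [matFrobNorm]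

lemma matFrobNorm_neg (A : Matrix a b ℝ) : matFrobNorm (-A) = matFrobNorm A := by
  simp [matFrobNorm]

lemma matFrobNorm_one_sq [DecidableEq a] :
    matFrobNorm (1 : Matrix a a ℝ) ^ 2 = Fintype.card a := by
  simp [matFrobNorm_sq, one_apply, apply_ite (· ^ 2 : ℝ → ℝ)]

lemma matFrobNorm_fromBlocks_sq {d : Type*} [Fintype d] (A : Matrix a c ℝ) (B : Matrix a d ℝ)
    (C : Matrix b c ℝ) (D : Matrix b d ℝ) :
    matFrobNorm (fromBlocks A B C D) ^ 2 =
      matFrobNorm A ^ 2 + matFrobNorm B ^ 2 + matFrobNorm C ^ 2 + matFrobNorm D ^ 2 := by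
  simp only [matFrobNorm_sq, Fintype.sum_sum_type, fromBlocks_apply₁₁, fromBlocks_apply₁₂,
    fromBlocks_apply₂₁, fromBlocks_apply₂₂, Finset.sum_add_distrib]
  ring

end MatrixNorms

lemma inv_fromBlocks_one_zero {m n α : Type*} [Fintype m] [Fintype n] [DecidableEq m]
    [DecidableEq n] [CommRing α] (C : Matrix n m α) {D : Matrix n n α} (hD : IsUnit D) :
    (fromBlocks (1 : Matrix m m α) 0 C D)⁻¹ = fromBlocks 1 0 (-(D⁻¹ * C)) D⁻¹ := by
  simpa using inv_fromBlocks_zero₁₂_of_isUnit_iff 1 C D (iff_of_true isUnit_one hD)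

theorem blockTriangular_inv_opNorm_bound_general {m n : ℕ} (K : ℝ)
    (M₁ : Matrix (Fin n) (Fin m) ℝ) (M₂ : Matrix (Fin n) (Fin n) ℝ)
    (hM₁ : matOpNorm M₁ ≤ K) (hM₂ : IsUnit M₂) :
    matOpNorm (Matrix.fromBlocks (1 : Matrix (Fin m) (Fin m) ℝ) 0 M₁ M₂)⁻¹ ≤
      Real.sqrt (m + (1 + m * K ^ 2) * matFrobNorm M₂⁻¹ ^ 2) ∧
    Real.sqrt (m + (1 + m * K ^ 2) * matFrobNorm M₂⁻¹ ^ 2) ≤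
      Real.sqrt (m + (1 + m * K ^ 2) * n * matOpNorm M₂⁻¹ ^ 2) := by
  have hM₁F : matFrobNorm M₁ ^ 2 ≤ m * K ^ 2 :=
    calc matFrobNorm M₁ ^ 2 ≤ m * matOpNorm M₁ ^ 2 := by
          simpa using matFrobNorm_sq_le_card_mul_matOpNorm_sq M₁
      _ ≤ m * K ^ 2 := by gcongr; exact matOpNorm_nonneg M₁
  have hM₂F : matFrobNorm M₂⁻¹ ^ 2 ≤ n * matOpNorm M₂⁻¹ ^ 2 := by
    simpa using matFrobNorm_sq_le_card_mul_matOpNorm_sq M₂⁻¹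
  have hM₂op : matOpNorm M₂⁻¹ ^ 2 ≤ matFrobNorm M₂⁻¹ ^ 2 := by
    gcongr
    exacts [matOpNorm_nonneg _, matOpNorm_le_matFrobNorm _]
  have hprod : matFrobNorm (M₂⁻¹ * M₁) ^ 2 ≤ m * K ^ 2 * matFrobNorm M₂⁻¹ ^ 2 :=
    calc matFrobNorm (M₂⁻¹ * M₁) ^ 2 ≤ matOpNorm M₂⁻¹ ^ 2 * matFrobNorm M₁ ^ 2 :=
          matFrobNorm_mul_sq_le _ _
      _ ≤ matFrobNorm M₂⁻¹ ^ 2 * (m * K ^ 2) := by gcongr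
      _ = m * K ^ 2 * matFrobNorm M₂⁻¹ ^ 2 := mul_comm _ _
  refine ⟨?_, Real.sqrt_le_sqrt ?_⟩
  · rw [inv_fromBlocks_one_zero M₁ hM₂]
    refine (matOpNorm_le_matFrobNorm _).trans ?_
    rw [← Real.sqrt_sq (matFrobNorm_nonneg _)]
    refine Real.sqrt_le_sqrt ?_
    rw [matFrobNorm_fromBlocks_sq, matFrobNorm_one_sq, matFrobNorm_zero, matFrobNorm_neg,
      Fintype.card_fin]
    linarith
  · rw [mul_assoc]
    gcongr

/-- For `M = [[I, 0], [M₁, M₂]]` with `‖M₁‖ ≤ K` and `M₂` invertible: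
`‖M⁻¹‖ ≤ (m + (1 + mK²)‖M₂⁻¹‖_F²)^{1/2} ≤ (m + (1 + mK²) n ‖M₂⁻¹‖²)^{1/2}`. -/
theorem blockTriangular_inv_opNorm_bound {m n : ℕ} (K : ℝ) (hK : 0 ≤ K)
    (M₁ : Matrix (Fin n) (Fin m) ℝ) (M₂ : Matrix (Fin n) (Fin n) ℝ)
    (hM₁ : matOpNorm M₁ ≤ K) (hM₂ : IsUnit M₂) :
    matOpNorm (Matrix.fromBlocks (1 : Matrix (Fin m) (Fin m) ℝ) 0 M₁ M₂)⁻¹ ≤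
      Real.sqrt (m + (1 + m * K ^ 2) * matFrobNorm M₂⁻¹ ^ 2) ∧
    Real.sqrt (m + (1 + m * K ^ 2) * matFrobNorm M₂⁻¹ ^ 2) ≤
      Real.sqrt (m + (1 + m * K ^ 2) * n * matOpNorm M₂⁻¹ ^ 2) :=
  blockTriangular_inv_opNorm_bound_general K M₁ M₂ hM₁ hM₂
end

section
/- Let f : ℝ² → ℝ², f(x, y) = ((5/2)|x| + 2x, (5/2)|y| + 2y), so that f(x, y) = ((9/2)x, (9/2)y) for x, y ≥ 0 and f(x, y) = (−(1/2)x, −(1/2)y) for x, y ≤ 0. Then f is not locally invertible at (0,0) in the sense that its generalized Jacobian at (0,0) contains a singular matrix: the matrices [[−1/2, 0],[0, −1/2]] and [[9/2, 0],[0, 9/2]] are both limits of Jacobians Jf(xᵢ, yᵢ) with (xᵢ, yᵢ) → (0,0), and the convex hull of these limits contains the zero matrix, which is singular. -/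
open Filter

private lemma clm_eq_smul (c : ℝ) :
    (Matrix.toEuclideanCLM (𝕜 := ℝ) !![c, 0; 0, c] :
      EuclideanSpace ℝ (Fin 2) →L[ℝ] EuclideanSpace ℝ (Fin 2))
      = c • (ContinuousLinearMap.id ℝ _) := by
  ext v i
  have := Matrix.ofLp_toEuclideanCLM (𝕜 := ℝ) !![c, 0; 0, c] v
  have h2 : (Matrix.toEuclideanCLM (𝕜 := ℝ) !![c, 0; 0, c] v) i
      = (!![c, 0; 0, c]).mulVec (WithLp.equiv _ _ v) i := congrFun this i
  rw [h2]
  fin_cases i <;>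
    simp [Matrix.mulVec, dotProduct, Fin.sum_univ_two]

private lemma hd_pos (f : EuclideanSpace ℝ (Fin 2) → EuclideanSpace ℝ (Fin 2))
    (hf : ∀ p : EuclideanSpace ℝ (Fin 2),
      f p = ![(5 / 2) * |p 0| + 2 * p 0, (5 / 2) * |p 1| + 2 * p 1])
    (p : EuclideanSpace ℝ (Fin 2)) (h0 : 0 < p 0) (h1 : 0 < p 1) :
    HasFDerivAt f
      ((Matrix.toEuclideanCLM (𝕜 := ℝ) !![(9 : ℝ)/2, 0; 0, 9/2] :
        EuclideanSpace ℝ (Fin 2) →L[ℝ] EuclideanSpace ℝ (Fin 2))) p := by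
  have hsm : HasFDerivAt (fun q : EuclideanSpace ℝ (Fin 2) => ((9:ℝ)/2) • q)
      (((9:ℝ)/2) • (ContinuousLinearMap.id ℝ _)) p :=
    ((hasFDerivAt_id p).const_smul _).congr_of_eventuallyEq (Filter.Eventually.of_forall fun _ => rfl)
  rw [clm_eq_smul]
  apply hsm.congr_of_eventuallyEq
  have hopen : IsOpen {q : EuclideanSpace ℝ (Fin 2) | 0 < q 0 ∧ 0 < q 1} :=
    (isOpen_lt continuous_const (EuclideanSpace.proj 0).continuous).inter
      (isOpen_lt continuous_const (EuclideanSpace.proj 1).continuous)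
  filter_upwards [hopen.mem_nhds ⟨h0, h1⟩] with q hq
  ext i
  rw [hf q]
  fin_cases i <;>
    simp [abs_of_pos hq.1, abs_of_pos hq.2] <;> ring

private lemma hd_neg (f : EuclideanSpace ℝ (Fin 2) → EuclideanSpace ℝ (Fin 2))
    (hf : ∀ p : EuclideanSpace ℝ (Fin 2),
      f p = ![(5 / 2) * |p 0| + 2 * p 0, (5 / 2) * |p 1| + 2 * p 1])
    (p : EuclideanSpace ℝ (Fin 2)) (h0 : p 0 < 0) (h1 : p 1 < 0) :
    HasFDerivAt f
      ((Matrix.toEuclideanCLM (𝕜 := ℝ) !![-(1 : ℝ)/2, 0; 0, -1/2] :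
        EuclideanSpace ℝ (Fin 2) →L[ℝ] EuclideanSpace ℝ (Fin 2))) p := by
  have hsm : HasFDerivAt (fun q : EuclideanSpace ℝ (Fin 2) => (-(1:ℝ)/2) • q)
      ((-(1:ℝ)/2) • (ContinuousLinearMap.id ℝ _)) p :=
    ((hasFDerivAt_id p).const_smul _).congr_of_eventuallyEq (Filter.Eventually.of_forall fun _ => rfl)
  rw [clm_eq_smul]
  apply hsm.congr_of_eventuallyEq
  have hopen : IsOpen {q : EuclideanSpace ℝ (Fin 2) | q 0 < 0 ∧ q 1 < 0} :=
    (isOpen_lt (EuclideanSpace.proj 0).continuous continuous_const).inter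
      (isOpen_lt (EuclideanSpace.proj 1).continuous continuous_const)
  filter_upwards [hopen.mem_nhds ⟨h0, h1⟩] with q hq
  ext i
  rw [hf q]
  fin_cases i <;>
    simp [abs_of_neg hq.1, abs_of_neg hq.2] <;> ring

/-- For `f(x,y) = ((5/2)|x| + 2x, (5/2)|y| + 2y)`, the matrices `diag(9/2, 9/2)` and
`diag(-1/2, -1/2)` are limits of Jacobians `Jf(xᵢ)` with `xᵢ → 0`, and the convex hull
of these limit Jacobians contains the zero matrix, which is singular. Hence the
generalized Jacobian of `f` at the origin contains a singular matrix. -/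
theorem example_generalized_jacobian_singular
    (f : EuclideanSpace ℝ (Fin 2) → EuclideanSpace ℝ (Fin 2))
    (hf : ∀ p : EuclideanSpace ℝ (Fin 2),
      f p = ![(5 / 2) * |p 0| + 2 * p 0, (5 / 2) * |p 1| + 2 * p 1]) :
    (∃ x : ℕ → EuclideanSpace ℝ (Fin 2), Tendsto x atTop (nhds 0) ∧ ∀ i,
      HasFDerivAt f
        ((Matrix.toEuclideanCLM (𝕜 := ℝ) !![(9 : ℝ)/2, 0; 0, 9/2] :
          EuclideanSpace ℝ (Fin 2) →L[ℝ] EuclideanSpace ℝ (Fin 2))) (x i)) ∧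
    (∃ x : ℕ → EuclideanSpace ℝ (Fin 2), Tendsto x atTop (nhds 0) ∧ ∀ i,
      HasFDerivAt f
        ((Matrix.toEuclideanCLM (𝕜 := ℝ) !![-(1 : ℝ)/2, 0; 0, -1/2] :
          EuclideanSpace ℝ (Fin 2) →L[ℝ] EuclideanSpace ℝ (Fin 2))) (x i)) ∧
    (0 : Matrix (Fin 2) (Fin 2) ℝ) ∈
      segment ℝ !![(9 : ℝ)/2, 0; 0, 9/2] !![-(1 : ℝ)/2, 0; 0, -1/2] ∧
    ¬ IsUnit (0 : Matrix (Fin 2) (Fin 2) ℝ) := by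
  set v : EuclideanSpace ℝ (Fin 2) := WithLp.toLp 2 (fun _ => 1) with hv
  have htend : ∀ c : ℝ, Tendsto (fun i : ℕ => ((c / (i + 1)) • v)) atTop (nhds 0) := by
    intro c
    have h1 : Tendsto (fun i : ℕ => (c / (i + 1) : ℝ)) atTop (nhds 0) :=
      tendsto_const_nhds.div_atTop (tendsto_natCast_atTop_atTop.atTop_add tendsto_const_nhds)
    have := h1.smul_const v
    simpa using this
  refine ⟨⟨fun i => ((1 / (i + 1) : ℝ)) • v, htend 1, fun i => ?_⟩,
    ⟨fun i => ((-1 / (i + 1) : ℝ)) • v, htend (-1), fun i => ?_⟩, ?_, ?_⟩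
  · apply hd_pos f hf <;>
    · show (0:ℝ) < (1 / (i + 1) : ℝ) • (1:ℝ)
      simp
      positivity
  · apply hd_neg f hf <;>
    · show ((-1 / (i + 1) : ℝ)) • (1:ℝ) < 0
      rw [smul_eq_mul, mul_one, div_neg_iff]
      right
      constructor <;> [norm_num; positivity]
  · refine ⟨1/10, 9/10, by norm_num, by norm_num, by norm_num, ?_⟩
    simp only [← Matrix.ext_iff, Fin.forall_fin_two, Matrix.add_apply, Matrix.smul_apply,
      Matrix.zero_apply, Matrix.cons_val', Matrix.cons_val_zero, Matrix.cons_val_one,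
      Matrix.head_cons, Matrix.empty_val', Matrix.cons_val_fin_one, Matrix.head_fin_const,
      smul_eq_mul]
    norm_num
  · exact not_isUnit_zero
end
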